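/- Let K be a field, k ≥ 2, with recurrence data α_j, β_j, γ_j ∈ K, α_j ≠ 0, defining the polynomials φ_j as usual. Fix λ_0 ∈ K, let D_i ∈ K^{m×m} (i = 0,…,k), D_0^{ev} := Σ_{i=0}^{k} D_i φ_i(λ_0), let A ∈ K^{n×n}, B ∈ K^{n×m}, C ∈ K^{m×n}, and let X, Y ∈ K^{n×n} and K_0 := [v⊗I_m, H] ∈ K^{km×km} (v ∈ K^k, H ∈ K^{km×(k−1)m}) all be invertible, and assume λ_0I_n − A is invertible. Set G_0 := D_0^{ev} + C(λ_0I_n−A)^{−1}B, L_0 := K_0·F_Φ^D(λ_0), and 𝓛_0 := [[X(λ_0I_n−A)Y, [0_{n×(k−1)m}, XB]], [−(v⊗I_m)CY, L_0]]. If (y;x)^T·𝓛_0 = 0 with (y;x) ≠ 0, where y ∈ K^n and x ∈ K^{km}, then (v^T⊗I_m)x ≠ 0 and ((v^T⊗I_m)x)^T·G_0 = 0. -/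

import Mathlib

/-!
Put `u := (vᵀ ⊗ I_m) x` and `Ψ := (φ_{k-1}(λ₀), …, φ_0(λ₀))`. The first block column of
`(y;x)ᵀ 𝓛₀ = 0` gives `yᵀ X Λ₀ = uᵀ C`. Multiplying the second block column on the right by
`Ψ ⊗ I_m` annihilates `M_Φ(λ₀) ⊗ I_m` (three-term recurrence) and turns `m_Φ^D(λ₀)` into
`D_0^{ev}`, and `K₀` sends the resulting first block to `v ⊗ I_m`; hence
`yᵀ X B + uᵀ D_0^{ev} = 0`, which together with the first relation gives `uᵀ G₀ = 0`.
If `u = 0`, then `y = 0`, and `w := xᵀ K₀` has zero first block with `wᵀ F_Φ^D(λ₀) = 0`. The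
leading `(k-1) × (k-1)` block of `M_Φ(λ₀)` is upper triangular with diagonal `-α_j ≠ 0`, so
`w = 0` and `x = 0`.
-/

open Matrix

/-- The matrix `v ⊗ I_m ∈ R^{km×m}` built from a vector `v ∈ R^k`. -/
def vKron {R : Type*} [Semiring R] (k m : ℕ) (v : Fin k → R) :
    Matrix (Fin k × Fin m) (Fin m) R :=
  Matrix.of fun p j => if p.2 = j then v p.1 else 0

/-- Evaluation of the pencil `M_Φ(λ) ∈ F[λ]^{(k-1)×k}` at `λ₀`. -/
noncomputable def MPhiEval {K : Type*} [Field K] (α β γ : ℕ → K) (k : ℕ) (lam0 : K) :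
    Matrix (Fin (k - 1)) (Fin k) K :=
  Matrix.of fun i j =>
    if (j : ℕ) = (i : ℕ) then -(α (k - 2 - (i : ℕ)))
    else if (j : ℕ) = (i : ℕ) + 1 then lam0 - β (k - 2 - (i : ℕ))
    else if (j : ℕ) = (i : ℕ) + 2 then -(γ (k - 2 - (i : ℕ)))
    else 0

/-- Evaluation of the block row `m_Φ^D(λ) ∈ F[λ]^{m×km}` at `λ₀`. -/
noncomputable def mPhiEval {K : Type*} [Field K] (α β γ : ℕ → K) (k m : ℕ)
    (D : ℕ → Matrix (Fin m) (Fin m) K) (lam0 : K) :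
    Matrix (Fin m) (Fin k × Fin m) K :=
  Matrix.of fun r c =>
    if (c.1 : ℕ) = 0 then
      (α (k - 1))⁻¹ * (lam0 - β (k - 1)) * D k r c.2 + D (k - 1) r c.2
    else if (c.1 : ℕ) = 1 then
      D (k - 2) r c.2 - (α (k - 1))⁻¹ * γ (k - 1) * D k r c.2
    else D (k - 1 - (c.1 : ℕ)) r c.2

/-- Evaluation of the pencil `F_Φ^D(λ) = [m_Φ^D(λ); M_Φ(λ) ⊗ I_m]` at `λ₀`. -/
noncomputable def FPhiEval {K : Type*} [Field K] (α β γ : ℕ → K) (k m : ℕ)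
    (D : ℕ → Matrix (Fin m) (Fin m) K) (lam0 : K) :
    Matrix (Fin k × Fin m) (Fin k × Fin m) K :=
  Matrix.of fun p q =>
    if h : (p.1 : ℕ) = 0 then mPhiEval α β γ k m D lam0 p.2 q
    else
      MPhiEval α β γ k lam0 ⟨(p.1 : ℕ) - 1, by have := p.1.isLt; omega⟩ q.1
        * (if p.2 = q.2 then 1 else 0)

/-- The constant `km × km` matrix `[v ⊗ I_m, H]`. -/
def concatKron {K : Type*} [Field K] (k m : ℕ) (v : Fin k → K)
    (H : Matrix (Fin k × Fin m) (Fin (k - 1) × Fin m) K) :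
    Matrix (Fin k × Fin m) (Fin k × Fin m) K :=
  Matrix.of fun p q =>
    if h : (q.1 : ℕ) = 0 then (if p.2 = q.2 then v p.1 else 0)
    else H p (⟨(q.1 : ℕ) - 1, by have := q.1.isLt; omega⟩, q.2)

def firstUnitVec (R : Type*) [Zero R] [One R] (k : ℕ) : Fin k → R :=
  fun c => if (c : ℕ) = 0 then 1 else 0

section vKron

variable {R : Type*} [Semiring R] {k m : ℕ}

theorem mul_vKron_apply {ι : Type*} (M : Matrix ι (Fin k × Fin m) R) (w : Fin k → R) (r : ι)
    (j : Fin m) : (M * vKron k m w) r j = ∑ c, M r (c, j) * w c := by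
  rw [mul_apply, Fintype.sum_prod_type]
  refine Fintype.sum_congr _ _ fun c => ?_
  rw [Finset.sum_eq_single j] <;> simp +contextual [vKron]

theorem vecMul_vKron_apply (x : Fin k × Fin m → R) (w : Fin k → R) (j : Fin m) :
    (x ᵥ* vKron k m w) j = ∑ c, x (c, j) * w c := by
  rw [vecMul, dotProduct, Fintype.sum_prod_type]
  refine Fintype.sum_congr _ _ fun c => ?_
  rw [Finset.sum_eq_single j] <;> simp +contextual [vKron]

theorem vKron_mul_apply {ι : Type*} (w : Fin k → R) (N : Matrix (Fin m) ι R)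
    (p : Fin k × Fin m) (j : ι) : (vKron k m w * N) p j = w p.1 * N p.2 j := by
  rw [mul_apply, Finset.sum_eq_single p.2] <;> simp +contextual [vKron, eq_comm]

end vKron

theorem lastBlock_mul_vKron {R ι : Type*} [CommSemiring R] {k m : ℕ} (hk : 0 < k)
    (M : Matrix ι (Fin m) R) (w : Fin k → R) :
    (of fun r (q : Fin k × Fin m) => if (q.1 : ℕ) = k - 1 then M r q.2 else 0) * vKron k m w
      = w ⟨k - 1, by omega⟩ • M := by
  refine Matrix.ext fun r j => ?_
  rw [mul_vKron_apply, Finset.sum_eq_single ⟨k - 1, by omega⟩]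
  · simp [mul_comm]
  · intro c _ hc
    simp [Fin.val_ne_iff.mpr hc]
  · simp

theorem sum_fin_ite_val_eq {M : Type*} [AddCommMonoid M] (k a : ℕ) (t : M) :
    ∑ c : Fin k, (if (c : ℕ) = a then t else 0) = if a < k then t else 0 := by
  simp only [Fin.sum_univ_eq_sum_range (fun c => if c = a then t else 0), Finset.sum_ite_eq',
    Finset.mem_range]

theorem sum_fin_pred_eq_sum_dite {M : Type*} [AddCommMonoid M] (k : ℕ) (f : Fin (k - 1) → M) :
    ∑ i, f i = ∑ a : Fin k, if h : (a : ℕ) = 0 then 0 else f ⟨a - 1, by omega⟩ := by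
  cases k with
  | zero => simp
  | succ n => simp [Fin.sum_univ_succ]

section Pencil

variable {K : Type*} [Field K] {α β γ : ℕ → K} {lam0 : K} {k m : ℕ}

/-- `ψ j` plays the role of `φ_j(λ₀)`; the `if` encodes `φ_{-1} = 0`. -/
def SatisfiesRecurrence (α β γ : ℕ → K) (lam0 : K) (ψ : ℕ → K) : Prop :=
  ∀ j : ℕ, α j * ψ (j + 1) = (lam0 - β j) * ψ j - γ j * (if j = 0 then 0 else ψ (j - 1))

theorem concatKron_mul_vKron_firstUnitVec (v : Fin k → K)
    (H : Matrix (Fin k × Fin m) (Fin (k - 1) × Fin m) K) :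
    concatKron k m v H * vKron k m (firstUnitVec K k) = vKron k m v := by
  refine Matrix.ext fun p j => ?_
  rw [mul_vKron_apply, Finset.sum_eq_single ⟨0, p.1.pos⟩]
  · simp [concatKron, vKron, firstUnitVec]
  · intro c _ hc
    simp [firstUnitVec, Fin.val_ne_iff.mpr hc]
  · simp

theorem MPhiEval_mulVec_reverse {ψ : ℕ → K} (hψ : SatisfiesRecurrence α β γ lam0 ψ) :
    MPhiEval α β γ k lam0 *ᵥ (fun c : Fin k => ψ (k - 1 - c)) = 0 := by
  funext i
  have hi := i.isLt
  set j := k - 2 - (i : ℕ)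
  have hrow : ∀ c : Fin k, MPhiEval α β γ k lam0 i c * ψ (k - 1 - c)
      = (if (c : ℕ) = i then -(α j * ψ (j + 1)) else 0)
        + (if (c : ℕ) = i + 1 then (lam0 - β j) * ψ j else 0)
        + (if (c : ℕ) = i + 2 then -(γ j * ψ (j - 1)) else 0) := by
    intro c
    simp only [MPhiEval, of_apply]
    split_ifs <;> first
      | omega
      | simp only [add_zero, zero_add, zero_mul]
    · rw [show k - 1 - (c : ℕ) = j + 1 by omega, neg_mul]
    · rw [show k - 1 - (c : ℕ) = j by omega]
    · rw [show k - 1 - (c : ℕ) = j - 1 by omega, neg_mul]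
  simp only [mulVec, dotProduct, Pi.zero_apply, hrow, Finset.sum_add_distrib,
    sum_fin_ite_val_eq, if_pos (show (i : ℕ) < k by omega),
    if_pos (show (i : ℕ) + 1 < k by omega)]
  have hrec := hψ j
  split_ifs at hrec ⊢ <;> first | omega | linear_combination -hrec

theorem mPhiEval_mul_vKron_reverse {ψ : ℕ → K} (hk : 2 ≤ k) (hα : α (k - 1) ≠ 0)
    (hψ : SatisfiesRecurrence α β γ lam0 ψ) (D : ℕ → Matrix (Fin m) (Fin m) K) :
    mPhiEval α β γ k m D lam0 * vKron k m (fun c => ψ (k - 1 - c))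
      = ∑ i ∈ Finset.range (k + 1), ψ i • D i := by
  obtain ⟨k, rfl⟩ : ∃ k', k = k' + 2 := ⟨k - 2, by omega⟩
  refine Matrix.ext fun r j => ?_
  rw [mul_vKron_apply, Fin.sum_univ_succ, Fin.sum_univ_succ, Matrix.sum_apply]
  have hidx : ∀ x : ℕ, k + 1 - (x + 1 + 1) = k - 1 - x := fun x => by omega
  have hne : ∀ x : ℕ, x + 1 + 1 ≠ 1 := fun x => by omega
  simp only [mPhiEval, of_apply, Matrix.smul_apply, smul_eq_mul, Fin.val_zero, Fin.val_succ,
    if_true, zero_add, add_eq_zero, one_ne_zero, and_false, if_false, hne, hidx,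
    show k + 2 - 1 = k + 1 by omega, show k + 2 - 2 = k by omega, Nat.sub_zero,
    Nat.add_sub_cancel]
  have htail : ∑ x : Fin k, D (k - 1 - x) r j * ψ (k - 1 - x)
      = ∑ i ∈ Finset.range k, ψ i * D i r j := by
    rw [Fin.sum_univ_eq_sum_range (fun x => D (k - 1 - x) r j * ψ (k - 1 - x)),
      Finset.sum_range_reflect (fun i => D i r j * ψ i)]
    exact Finset.sum_congr rfl fun i _ => mul_comm _ _
  -- `m_Φ^D` absorbs the `D_k φ_k(λ₀)` term through the recurrence at `j = k - 1`.
  have hrec : α (k + 1) * ψ (k + 2) = (lam0 - β (k + 1)) * ψ (k + 1) - γ (k + 1) * ψ k := by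
    simpa using hψ (k + 1)
  have hα' : α (k + 1) ≠ 0 := by simpa using hα
  rw [htail, Finset.sum_range_succ, Finset.sum_range_succ, Finset.sum_range_succ]
  field_simp
  linear_combination (-D (k + 2) r j) * hrec

theorem FPhiEval_mul_vKron_reverse {ψ : ℕ → K} (hk : 2 ≤ k) (hα : α (k - 1) ≠ 0)
    (hψ : SatisfiesRecurrence α β γ lam0 ψ) (D : ℕ → Matrix (Fin m) (Fin m) K) :
    FPhiEval α β γ k m D lam0 * vKron k m (fun c => ψ (k - 1 - c))
      = vKron k m (firstUnitVec K k) * ∑ i ∈ Finset.range (k + 1), ψ i • D i := by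
  refine Matrix.ext fun ⟨a, r⟩ j => ?_
  rw [mul_vKron_apply, vKron_mul_apply]
  by_cases ha : (a : ℕ) = 0
  · simp only [FPhiEval, of_apply, dif_pos ha, firstUnitVec, if_pos ha, one_mul]
    rw [← mul_vKron_apply, mPhiEval_mul_vKron_reverse hk hα hψ]
  · simp only [FPhiEval, of_apply, dif_neg ha, firstUnitVec, if_neg ha, zero_mul]
    have hrow := congrFun (MPhiEval_mulVec_reverse (k := k) hψ) ⟨(a : ℕ) - 1, by omega⟩
    split_ifs
    · simpa [mulVec, dotProduct] using hrow
    · simp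

theorem MPhiEval_submatrix_castLE_isUpperTriangular (α β γ : ℕ → K) (k : ℕ) (lam0 : K) :
    ((MPhiEval α β γ k lam0).submatrix id (Fin.castLE (Nat.sub_le k 1))).IsUpperTriangular := by
  intro i c (hci : (c : ℕ) < i)
  simp only [submatrix_apply, id, MPhiEval, of_apply, Fin.val_castLE]
  rw [if_neg (by omega), if_neg (by omega), if_neg (by omega)]

theorem eq_zero_of_vecMul_MPhiEval_eq_zero (hα : ∀ j, α j ≠ 0) {u : Fin (k - 1) → K}
    (hu : u ᵥ* MPhiEval α β γ k lam0 = 0) : u = 0 := by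
  refine eq_zero_of_vecMul_eq_zero (M := (MPhiEval α β γ k lam0).submatrix id
    (Fin.castLE (Nat.sub_le k 1))) ?_ (funext fun c => congrFun hu (Fin.castLE _ c))
  rw [det_of_isUpperTriangular (MPhiEval_submatrix_castLE_isUpperTriangular α β γ k lam0),
    Finset.prod_ne_zero_iff]
  intro i _
  simp [MPhiEval, hα]

theorem eq_zero_of_vecMul_FPhiEval_eq_zero (hα : ∀ j, α j ≠ 0)
    (D : ℕ → Matrix (Fin m) (Fin m) K) {w : Fin k × Fin m → K}
    (hw₀ : w ᵥ* vKron k m (firstUnitVec K k) = 0) (hw : w ᵥ* FPhiEval α β γ k m D lam0 = 0) :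
    w = 0 := by
  have hfirst : ∀ p : Fin k × Fin m, (p.1 : ℕ) = 0 → w p = 0 := by
    rintro ⟨a, r⟩ (ha : (a : ℕ) = 0)
    have h := congrFun hw₀ r
    rw [vecMul_vKron_apply, Finset.sum_eq_single a] at h
    · simpa [firstUnitVec, ha] using h
    · intro c _ hc
      simp [firstUnitVec, show (c : ℕ) ≠ 0 by omega]
    · simp
  have htail : ∀ b : Fin m,
      (fun i : Fin (k - 1) => w (⟨i + 1, by omega⟩, b)) ᵥ* MPhiEval α β γ k lam0 = 0 := by
    intro b
    funext c
    refine Eq.trans ?_ (congrFun hw (c, b))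
    simp only [vecMul, dotProduct, Fintype.sum_prod_type, sum_fin_pred_eq_sum_dite]
    refine Fintype.sum_congr _ _ fun a => ?_
    by_cases ha : (a : ℕ) = 0
    · simp [ha, hfirst]
    · simp [FPhiEval, ha, Nat.sub_add_cancel (Nat.pos_of_ne_zero ha)]
  funext ⟨a, b⟩
  by_cases ha : (a : ℕ) = 0
  · exact hfirst _ ha
  · have := congrFun (eq_zero_of_vecMul_MPhiEval_eq_zero hα (htail b)) ⟨a - 1, by omega⟩
    simpa [Nat.sub_add_cancel (Nat.pos_of_ne_zero ha)] using this

end Pencil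

theorem recovery_left_eigenvectors_M1_general
    {K : Type*} [Field K] {m n k : ℕ} (hk : 2 ≤ k)
    (α β γ : ℕ → K) (hα : ∀ j, α j ≠ 0) (lam0 : K)
    (D : ℕ → Matrix (Fin m) (Fin m) K)
    (X Y : Matrix (Fin n) (Fin n) K) (B : Matrix (Fin n) (Fin m) K)
    (C : Matrix (Fin m) (Fin n) K)
    (v : Fin k → K) (H : Matrix (Fin k × Fin m) (Fin (k - 1) × Fin m) K)
    (hX : IsUnit X.det) (hY : IsUnit Y.det)
    (hK0 : IsUnit (concatKron k m v H).det)
    (Λ₀ : Matrix (Fin n) (Fin n) K)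
    (hAreg : IsUnit Λ₀.det)
    (ψ : ℕ → K) (hψ0 : ψ 0 = 1)
    (hψrec : ∀ j : ℕ, α j * ψ (j + 1)
      = (lam0 - β j) * ψ j - γ j * (if j = 0 then 0 else ψ (j - 1)))
    (G₀ : Matrix (Fin m) (Fin m) K)
    (hG₀ : G₀ = (∑ i ∈ Finset.range (k + 1), ψ i • D i) + C * Λ₀⁻¹ * B)
    (L₀ : Matrix (Fin k × Fin m) (Fin k × Fin m) K)
    (hL₀ : L₀ = concatKron k m v H * FPhiEval α β γ k m D lam0)
    (𝓛₀ : Matrix (Fin n ⊕ (Fin k × Fin m)) (Fin n ⊕ (Fin k × Fin m)) K)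
    (h𝓛₀ : 𝓛₀ = Matrix.fromBlocks (X * Λ₀ * Y)
        (Matrix.of fun r (q : Fin k × Fin m) =>
          if (q.1 : ℕ) = k - 1 then (X * B) r q.2 else 0)
        (-(vKron k m v * C * Y)) L₀) :
    ∀ (y : Fin n → K) (x : Fin k × Fin m → K),
      Sum.elim y x ᵥ* 𝓛₀ = 0 → Sum.elim y x ≠ 0 →
        (vKron k m v)ᵀ *ᵥ x ≠ 0 ∧ ((vKron k m v)ᵀ *ᵥ x) ᵥ* G₀ = 0 := by
  intro y x h𝓛 hyx
  subst h𝓛₀ hL₀ hG₀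
  rw [vecMul_fromBlocks, ← Sum.elim_zero_zero, Sum.elim_eq_iff] at h𝓛
  simp only [Sum.elim_comp_inl, Sum.elim_comp_inr] at h𝓛
  obtain ⟨h₁, h₂⟩ := h𝓛
  obtain ⟨u, hu⟩ : ∃ u, x ᵥ* vKron k m v = u := ⟨_, rfl⟩
  rw [mulVec_transpose, hu]
  set Dev := ∑ i ∈ Finset.range (k + 1), ψ i • D i
  have hyΛ : y ᵥ* (X * Λ₀) = u ᵥ* C := by
    refine vecMul_injective_of_isUnit ((isUnit_iff_isUnit_det Y).mpr hY) ?_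
    rw [vecMul_neg] at h₁
    simp only [← hu, vecMul_vecMul]
    exact add_neg_eq_zero.mp h₁
  have hyB : y ᵥ* (X * B) + u ᵥ* Dev = 0 := by
    have h := congrArg (· ᵥ* vKron k m (fun c => ψ (k - 1 - c))) h₂
    simp only [add_vecMul, zero_vecMul, vecMul_vecMul] at h
    rwa [lastBlock_mul_vKron (by omega), Matrix.mul_assoc,
      FPhiEval_mul_vKron_reverse hk (hα _) hψrec, ← Matrix.mul_assoc,
      concatKron_mul_vKron_firstUnitVec, ← vecMul_vecMul, hu,
      show k - 1 - (k - 1) = 0 by omega, hψ0, one_smul] at h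
  refine ⟨fun hu0 => hyx ?_, ?_⟩
  · have hy : y = 0 := eq_zero_of_vecMul_eq_zero
      (by rw [det_mul]; exact (hX.mul hAreg).ne_zero) (by rw [hyΛ, hu0, zero_vecMul])
    have hx₀ : (x ᵥ* concatKron k m v H) ᵥ* vKron k m (firstUnitVec K k) = 0 := by
      rw [vecMul_vecMul, concatKron_mul_vKron_firstUnitVec, hu, hu0]
    have hxF : (x ᵥ* concatKron k m v H) ᵥ* FPhiEval α β γ k m D lam0 = 0 := by
      rwa [hy, zero_vecMul, zero_add, ← vecMul_vecMul] at h₂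
    have hx : x = 0 :=
      eq_zero_of_vecMul_eq_zero hK0.ne_zero (eq_zero_of_vecMul_FPhiEval_eq_zero hα D hx₀ hxF)
    rw [hy, hx, Sum.elim_zero_zero]
  · calc u ᵥ* (Dev + C * Λ₀⁻¹ * B)
        = u ᵥ* Dev + (y ᵥ* (X * Λ₀)) ᵥ* (Λ₀⁻¹ * B) := by
          rw [vecMul_add, hyΛ, vecMul_vecMul, Matrix.mul_assoc]
      _ = 0 := by
          rw [vecMul_vecMul, ← Matrix.mul_assoc, mul_nonsing_inv_cancel_right _ _ hAreg, add_comm,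
            hyB]

/-- Recovery of left eigenvectors of a rational matrix from those of an
`𝕄₁`-strong linearization, evaluated at `λ₀` with `det(λ₀I_n − A) ≠ 0`: if
`(y;x)ᵀ 𝓛₀ = 0` with `(y;x) ≠ 0`, then `(vᵀ⊗I_m)x ≠ 0` and `((vᵀ⊗I_m)x)ᵀ G₀ = 0`. -/
theorem recovery_left_eigenvectors_M1
    {K : Type*} [Field K] {m n k : ℕ} (hk : 2 ≤ k)
    (α β γ : ℕ → K) (hα : ∀ j, α j ≠ 0) (lam0 : K)
    (D : ℕ → Matrix (Fin m) (Fin m) K)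
    (A X Y : Matrix (Fin n) (Fin n) K) (B : Matrix (Fin n) (Fin m) K)
    (C : Matrix (Fin m) (Fin n) K)
    (v : Fin k → K) (H : Matrix (Fin k × Fin m) (Fin (k - 1) × Fin m) K)
    (hX : IsUnit X.det) (hY : IsUnit Y.det)
    (hK0 : IsUnit (concatKron k m v H).det)
    (Λ₀ : Matrix (Fin n) (Fin n) K)
    (hΛ₀ : Λ₀ = Matrix.diagonal (fun _ => lam0) - A)
    (hAreg : IsUnit Λ₀.det)
    (ψ : ℕ → K) (hψ0 : ψ 0 = 1)
    (hψrec : ∀ j : ℕ, α j * ψ (j + 1)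
      = (lam0 - β j) * ψ j - γ j * (if j = 0 then 0 else ψ (j - 1)))
    (G₀ : Matrix (Fin m) (Fin m) K)
    (hG₀ : G₀ = (∑ i ∈ Finset.range (k + 1), ψ i • D i) + C * Λ₀⁻¹ * B)
    (L₀ : Matrix (Fin k × Fin m) (Fin k × Fin m) K)
    (hL₀ : L₀ = concatKron k m v H * FPhiEval α β γ k m D lam0)
    (𝓛₀ : Matrix (Fin n ⊕ (Fin k × Fin m)) (Fin n ⊕ (Fin k × Fin m)) K)
    (h𝓛₀ : 𝓛₀ = Matrix.fromBlocks (X * Λ₀ * Y)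
        (Matrix.of fun r (q : Fin k × Fin m) =>
          if (q.1 : ℕ) = k - 1 then (X * B) r q.2 else 0)
        (-(vKron k m v * C * Y)) L₀) :
    ∀ (y : Fin n → K) (x : Fin k × Fin m → K),
      Sum.elim y x ᵥ* 𝓛₀ = 0 → Sum.elim y x ≠ 0 →
        (vKron k m v)ᵀ *ᵥ x ≠ 0 ∧ ((vKron k m v)ᵀ *ᵥ x) ᵥ* G₀ = 0 :=
  recovery_left_eigenvectors_M1_general hk α β γ hα lam0 D X Y B C v H hX hY hK0 Λ₀ hAreg ψ hψ0
    hψrec G₀ hG₀ L₀ hL₀ 𝓛₀ h𝓛₀
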